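/- For a gradient-flow trajectory of a two-layer ReLU network on an orthogonally separable dataset, starting from a balanced and live initialisation, with either the exponential or the logistic loss: for each j ∈ [k], either sup_{t ≥ 0} |a_j(t)| < ∞, or |a_j(t)| → ∞ as t → ∞. -/

import Mathlib

open MeasureTheory Filter Finset

/-!
Balance `|a_j(0)| = ‖w_j(0)‖` is preserved, because the ReLU selection makes
`d/dt ‖w_j‖² = 2 a_j a_j'`. Hence `|a_j'| ≤ K(t) |a_j|` with `K` continuous, and a backward
Grönwall argument shows that `a_j` never vanishes, so it keeps a sign `s`. For
`z = Σ_i y_i x_i`, orthogonal separability gives `y_i ⟨x_i, z⟩ ≥ ‖x_i‖²`, and then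
`u(t) = s ⟨w_j(t), z⟩` satisfies `u' ≥ c |a_j'| ≥ 0` with `c = min_i ‖x_i‖`. If the
nondecreasing `u` is bounded, so is the total variation of `a_j`; otherwise
`|a_j| ≥ u / ‖z‖ → ∞`.
-/

noncomputable def dotp {m : ℕ} (u v : Fin m → ℝ) : ℝ := ∑ i, u i * v i

noncomputable def norm2 {m : ℕ} (v : Fin m → ℝ) : ℝ := Real.sqrt (∑ i, v i ^ 2)

noncomputable def relu (u : ℝ) : ℝ := max u 0

/-- The two-layer ReLU network `N_θ(z) = Σ_j a_j ψ(w_jᵀ z)`. -/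
noncomputable def net {d k : ℕ} (w : Fin k → Fin d → ℝ) (a : Fin k → ℝ)
    (z : Fin d → ℝ) : ℝ :=
  ∑ j, a j * relu (dotp (w j) z)

open Set

lemma norm2_nonneg {m : ℕ} (v : Fin m → ℝ) : 0 ≤ norm2 v := Real.sqrt_nonneg _

lemma norm2_sq_eq_dotp {m : ℕ} (v : Fin m → ℝ) : norm2 v ^ 2 = dotp v v := by
  rw [norm2, Real.sq_sqrt (by positivity), dotp]
  simp only [sq]

lemma dotp_comm {m : ℕ} (u v : Fin m → ℝ) : dotp u v = dotp v u := by
  simp only [dotp, mul_comm]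

lemma abs_dotp_le {m : ℕ} (u v : Fin m → ℝ) : |dotp u v| ≤ norm2 u * norm2 v := by
  rw [← Real.sqrt_sq_eq_abs, norm2, norm2, ← Real.sqrt_mul (by positivity)]
  exact Real.sqrt_le_sqrt (Finset.sum_mul_sq_le_sq_mul_sq _ u v)

lemma dotp_sum_left {m n : ℕ} (c : Fin n → ℝ) (x : Fin n → Fin m → ℝ) (u : Fin m → ℝ) :
    dotp (fun ic => ∑ i, c i * x i ic) u = ∑ i, c i * dotp (x i) u := by
  simp only [dotp, Finset.sum_mul, Finset.mul_sum]
  rw [Finset.sum_comm]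
  simp only [mul_assoc]

lemma dotp_sum_right {m n : ℕ} (u : Fin m → ℝ) (c : Fin n → ℝ) (x : Fin n → Fin m → ℝ) :
    dotp u (fun ic => ∑ i, c i * x i ic) = ∑ i, c i * dotp u (x i) := by
  rw [dotp_comm, dotp_sum_left]
  simp only [dotp_comm]

lemma relu_le_abs (v : ℝ) : relu v ≤ |v| := max_le (le_abs_self v) (abs_nonneg v)

lemma mul_eq_relu_of_selection {σ v : ℝ} (h0 : v < 0 → σ = 0) (h1 : 0 < v → σ = 1) :
    σ * v = relu v := by
  rcases lt_trichotomy v 0 with hv | rfl | hv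
  · rw [h0 hv, zero_mul, relu, max_eq_right hv.le]
  · simp [relu]
  · rw [h1 hv, one_mul, relu, max_eq_left hv.le]

lemma continuous_deriv_loss_and_deriv_nonpos {ℓ : ℝ → ℝ}
    (hℓ : (ℓ = fun u => Real.exp (-u)) ∨ (ℓ = fun u => Real.log (1 + Real.exp (-u)))) :
    Continuous (deriv ℓ) ∧ ∀ u, deriv ℓ u ≤ 0 := by
  have hexp : ∀ u, HasDerivAt (fun v => Real.exp (-v)) (-Real.exp (-u)) u := fun u =>
    ((hasDerivAt_neg u).exp).congr_deriv (by ring)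
  rcases hℓ with rfl | rfl
  · rw [funext fun u => (hexp u).deriv]
    exact ⟨by fun_prop, fun u => neg_nonpos.mpr (Real.exp_pos _).le⟩
  · have hlog : ∀ u, HasDerivAt (fun v => Real.log (1 + Real.exp (-v)))
        (-Real.exp (-u) / (1 + Real.exp (-u))) u := fun u =>
      ((hexp u).const_add 1).log (by positivity)
    rw [funext fun u => (hlog u).deriv]
    exact ⟨by fun_prop (disch := intro; positivity), fun u =>
      div_nonpos_of_nonpos_of_nonneg (neg_nonpos.mpr (Real.exp_pos _).le) (by positivity)⟩

lemma Finite.exists_pos_le {ι : Type*} [Finite ι] {f : ι → ℝ} (hf : ∀ i, 0 < f i) :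
    ∃ c > 0, ∀ i, c ≤ f i := by
  cases isEmpty_or_nonempty ι
  · exact ⟨1, one_pos, fun i => isEmptyElim i⟩
  · obtain ⟨i₀, hi₀⟩ := Finite.exists_min f
    exact ⟨f i₀, hf i₀, hi₀⟩

lemma dotp_self_le_mul_dotp_sum {d n : ℕ} {x : Fin n → Fin d → ℝ} {y : Fin n → ℝ}
    (hy : ∀ i, y i = 1 ∨ y i = -1)
    (hsep1 : ∀ i i', y i = y i' → 0 < dotp (x i) (x i'))
    (hsep2 : ∀ i i', y i ≠ y i' → dotp (x i) (x i') ≤ 0) (i : Fin n) :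
    dotp (x i) (x i) ≤ y i * dotp (x i) (fun ic => ∑ i', y i' * x i' ic) := by
  have hyy : ∀ i', y i * y i' = if y i = y i' then 1 else -1 := by
    intro i'
    rcases hy i with h1 | h1 <;> rcases hy i' with h2 | h2 <;> norm_num [h1, h2]
  have hterm : ∀ i', y i * (y i' * dotp (x i) (x i')) = (y i * y i') * dotp (x i) (x i') :=
    fun i' => (mul_assoc _ _ _).symm
  rw [dotp_sum_right, Finset.mul_sum, Finset.sum_congr rfl fun i' _ => hterm i']
  refine le_trans (le_of_eq ?_) (Finset.single_le_sum (fun i' _ => ?_) (Finset.mem_univ i))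
  · simp [hyy]
  · rw [hyy]
    split_ifs with h
    · simpa using (hsep1 i i' h).le
    · simpa using hsep2 i i' h

lemma exists_pos_mul_norm2_le_margin {d n : ℕ} {x : Fin n → Fin d → ℝ} {y : Fin n → ℝ}
    (hy : ∀ i, y i = 1 ∨ y i = -1)
    (hsep1 : ∀ i i', y i = y i' → 0 < dotp (x i) (x i'))
    (hsep2 : ∀ i i', y i ≠ y i' → dotp (x i) (x i') ≤ 0) :
    ∃ c > 0, ∀ i, c * norm2 (x i) ≤ y i * dotp (x i) (fun ic => ∑ i', y i' * x i' ic) := by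
  have hx : ∀ i, 0 < norm2 (x i) := fun i =>
    Real.sqrt_pos.mpr (by simpa [dotp, sq] using hsep1 i i rfl)
  obtain ⟨c, hc, hcx⟩ := Finite.exists_pos_le hx
  refine ⟨c, hc, fun i => ?_⟩
  calc c * norm2 (x i) ≤ norm2 (x i) ^ 2 := by
        rw [sq]; exact mul_le_mul_of_nonneg_right (hcx i) (hx i).le
    _ = dotp (x i) (x i) := norm2_sq_eq_dotp _
    _ ≤ _ := dotp_self_le_mul_dotp_sum hy hsep1 hsep2 i

lemma continuous_of_eq_add_integral {f g : ℝ → ℝ}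
    (hg : ∀ t, IntervalIntegrable g volume 0 t) (hf : ∀ t, f t = f 0 + ∫ s in (0:ℝ)..t, g s) :
    Continuous f := by
  rw [funext hf]
  exact continuous_const.add
    (intervalIntegral.continuous_primitive (fun a b => (hg a).symm.trans (hg b)) 0)

lemma sq_eq_sq_add_integral {f g : ℝ → ℝ} {t : ℝ} (hg : IntervalIntegrable g volume 0 t)
    (hf : ∀ s, f s = f 0 + ∫ r in (0:ℝ)..s, g r) :
    f t ^ 2 = f 0 ^ 2 + ∫ s in (0:ℝ)..t, 2 * f s * g s := by
  have hac : AbsolutelyContinuousOnInterval f 0 t := by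
    rw [funext hf]
    exact (LipschitzWith.const (f 0)).lipschitzOnWith.absolutelyContinuousOnInterval.fun_add
      (hg.absolutelyContinuousOnInterval_intervalIntegral (by simp))
  have hderiv : ∀ᵐ s, s ∈ uIoc 0 t → deriv f s * f s + f s * deriv f s = 2 * f s * g s := by
    filter_upwards [hg.ae_hasDerivAt_integral] with s hs hsI
    have : HasDerivAt f (g s) s := by
      rw [funext hf]
      exact (hs (uIoc_subset_uIcc hsI) 0 (by simp)).const_add _
    rw [this.deriv]; ring
  rw [← intervalIntegral.integral_congr_ae hderiv, hac.integral_deriv_mul_eq_sub hac]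
  ring

lemma le_zero_of_le_mul_integral {F : ℝ → ℝ} {M a b : ℝ} (hab : a ≤ b) (hM : 0 ≤ M)
    (hF : Continuous F) (h : ∀ s ∈ Icc a b, F s ≤ M * ∫ r in s..b, F r) : F a ≤ 0 := by
  set Ψ : ℝ → ℝ := fun s => ∫ r in s..b, F r
  have hΨ : ∀ s, HasDerivAt Ψ (-F s) s := fun s =>
    intervalIntegral.integral_hasDerivAt_left (hF.intervalIntegrable _ _)
      (hF.stronglyMeasurableAtFilter _ _) hF.continuousAt
  -- `s ↦ exp (M s) Ψ s` is nondecreasing on `[a, b]` and vanishes at `b`.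
  have hη : ∀ s, HasDerivAt (fun s => Real.exp (s * M) * Ψ s)
      (Real.exp (s * M) * (M * Ψ s - F s)) s := fun s =>
    ((hasDerivAt_mul_const M).exp.fun_mul (hΨ s)).congr_deriv (by ring)
  have hmono : MonotoneOn (fun s => Real.exp (s * M) * Ψ s) (Icc a b) := by
    refine monotoneOn_of_deriv_nonneg (convex_Icc a b)
      (fun s _ => (hη s).continuousAt.continuousWithinAt)
      (fun s _ => (hη s).differentiableAt.differentiableWithinAt) fun s hs => ?_
    rw [interior_Icc] at hs
    rw [(hη s).deriv]
    exact mul_nonneg (Real.exp_pos _).le (sub_nonneg.mpr (h s (Ioo_subset_Icc_self hs)))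
  have hΨa : Ψ a ≤ 0 := by
    have := hmono (left_mem_Icc.mpr hab) (right_mem_Icc.mpr hab) hab
    simpa [Ψ, (Real.exp_pos _).le, mul_nonpos_iff, (Real.exp_pos _).not_ge] using this
  exact (h a (left_mem_Icc.mpr hab)).trans (mul_nonpos_of_nonneg_of_nonpos hM hΨa)

lemma ne_zero_of_abs_deriv_le_mul {f g K : ℝ → ℝ}
    (hg : ∀ t, IntervalIntegrable g volume 0 t) (hf : ∀ t, f t = f 0 + ∫ s in (0:ℝ)..t, g s)
    (hK : Continuous K) (hgK : ∀ᵐ t ∂(volume.restrict (Ici (0:ℝ))), |g t| ≤ K t * |f t|)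
    (h0 : f 0 ≠ 0) {t : ℝ} (ht : 0 ≤ t) : f t ≠ 0 := by
  intro hft
  have hfc := continuous_of_eq_add_integral hg hf
  obtain ⟨M, hM⟩ := isCompact_Icc.exists_bound_of_continuousOn (hK.continuousOn (s := Icc 0 t))
  have hM0 : 0 ≤ M := (norm_nonneg _).trans (hM t ⟨ht, le_rfl⟩)
  have hfg : ∀ t, IntervalIntegrable (fun s => 2 * f s * g s) volume 0 t := fun t =>
    (hg t).continuousOn_mul (by fun_prop)
  -- A zero at `t` gives `f s ^ 2 = -∫ s..t (f ^ 2)' ≤ 2M ∫ s..t f ^ 2`, and backward Grönwall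
  -- then forces `f 0 = 0`.
  have hback : ∀ s ∈ Icc 0 t, f s ^ 2 ≤ (2 * M) * ∫ r in s..t, f r ^ 2 := by
    intro s hs
    have hdiff : f s ^ 2 = -∫ r in s..t, 2 * f r * g r := by
      rw [← intervalIntegral.integral_interval_sub_left (hfg t) (hfg s)]
      linarith [sq_eq_sq_add_integral (hg t) hf, sq_eq_sq_add_integral (hg s) hf,
        show f t ^ 2 = 0 by rw [hft]; ring]
    rw [hdiff, ← intervalIntegral.integral_const_mul]
    refine (neg_le_abs _).trans ((intervalIntegral.abs_integral_le_integral_abs hs.2).trans ?_)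
    refine intervalIntegral.integral_mono_ae_restrict hs.2 ((hfg s).symm.trans (hfg t)).abs
      (Continuous.intervalIntegrable (by fun_prop) _ _) ?_
    have hsub : Icc s t ⊆ Ici 0 := fun r hr => hs.1.trans hr.1
    filter_upwards [ae_restrict_mem measurableSet_Icc, ae_restrict_of_ae_restrict_of_subset hsub hgK]
      with r hr hgr
    have hKr : K r ≤ M := (le_abs_self _).trans (hM r ⟨hsub hr, hr.2⟩)
    calc |2 * f r * g r| = 2 * |f r| * |g r| := by rw [abs_mul, abs_mul, abs_two]
      _ ≤ 2 * |f r| * (M * |f r|) := by gcongr; exact hgr.trans (by gcongr)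
      _ = 2 * M * f r ^ 2 := by rw [← sq_abs (f r)]; ring
  have := le_zero_of_le_mul_integral ht (by positivity) (by fun_prop) hback
  exact h0 (pow_eq_zero_iff two_ne_zero |>.mp (le_antisymm this (sq_nonneg _)))

lemma exists_sign_mul_eq_abs {f : ℝ → ℝ} (hf : Continuous f) (hne : ∀ t, 0 ≤ t → f t ≠ 0) :
    ∃ s : ℝ, |s| = 1 ∧ ∀ t, 0 ≤ t → s * f t = |f t| := by
  rcases isPreconnected_Ici.eq_or_eq_neg_of_sq_eq (f := fun t => |f t|) (g := f)
    hf.abs.continuousOn hf.continuousOn (fun t _ => by simp [sq_abs]) (hne _) with h | h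
  · exact ⟨1, abs_one, fun t ht => by rw [one_mul]; exact (h ht).symm⟩
  · exact ⟨-1, by simp, fun t ht => by rw [neg_one_mul]; exact (h ht).symm⟩

lemma monotoneOn_of_eq_add_integral {u g : ℝ → ℝ}
    (hg : ∀ t, IntervalIntegrable g volume 0 t) (hu : ∀ t, u t = u 0 + ∫ s in (0:ℝ)..t, g s)
    (hg0 : ∀ᵐ t ∂(volume.restrict (Ici (0:ℝ))), 0 ≤ g t) : MonotoneOn u (Ici 0) := by
  intro s hs t _ hst
  have hsub : Icc s t ⊆ Ici 0 := fun r hr => le_trans hs hr.1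
  have : 0 ≤ ∫ r in s..t, g r := intervalIntegral.integral_nonneg_of_ae_restrict hst
    (ae_restrict_of_ae_restrict_of_subset hsub hg0)
  rw [← intervalIntegral.integral_interval_sub_left (hg t) (hg s)] at this
  linarith [hu s, hu t]

lemma mul_abs_sub_le_sub_of_eq_add_integral {v v' u g : ℝ → ℝ} {c : ℝ} (hc : 0 ≤ c)
    (hv' : ∀ t, IntervalIntegrable v' volume 0 t) (hv : ∀ t, v t = v 0 + ∫ s in (0:ℝ)..t, v' s)
    (hg : ∀ t, IntervalIntegrable g volume 0 t) (hu : ∀ t, u t = u 0 + ∫ s in (0:ℝ)..t, g s)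
    (hvg : ∀ᵐ t ∂(volume.restrict (Ici (0:ℝ))), c * |v' t| ≤ g t) {t : ℝ} (ht : 0 ≤ t) :
    c * |v t - v 0| ≤ u t - u 0 := by
  have hcv' : c * |v t - v 0| ≤ ∫ s in (0:ℝ)..t, c * |v' s| := by
    rw [hv t, add_sub_cancel_left, intervalIntegral.integral_const_mul]
    gcongr
    exact intervalIntegral.abs_integral_le_integral_abs ht
  refine hcv'.trans ?_
  rw [hu t, add_sub_cancel_left]
  exact intervalIntegral.integral_mono_ae_restrict ht ((hv' t).abs.const_mul c) (hg t)
    (ae_restrict_of_ae_restrict_of_subset Icc_subset_Ici_self hvg)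

lemma bounded_or_tendsto_abs_atTop {v v' u g : ℝ → ℝ} {c C : ℝ} (hc : 0 < c)
    (hv' : ∀ t, IntervalIntegrable v' volume 0 t) (hv : ∀ t, v t = v 0 + ∫ s in (0:ℝ)..t, v' s)
    (hg : ∀ t, IntervalIntegrable g volume 0 t) (hu : ∀ t, u t = u 0 + ∫ s in (0:ℝ)..t, g s)
    (hvg : ∀ᵐ t ∂(volume.restrict (Ici (0:ℝ))), c * |v' t| ≤ g t)
    (huv : ∀ t, 0 ≤ t → u t ≤ C * |v t|) :
    (∃ M, ∀ t, 0 ≤ t → |v t| ≤ M) ∨ Tendsto (fun t => |v t|) atTop atTop := by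
  have hmono : MonotoneOn u (Ici 0) := monotoneOn_of_eq_add_integral hg hu
    (hvg.mono fun t ht => (by positivity : 0 ≤ c * |v' t|).trans ht)
  by_cases hbdd : BddAbove (u '' Ici 0)
  · obtain ⟨U, hU⟩ := hbdd
    refine Or.inl ⟨|v 0| + (U - u 0) / c, fun t ht => ?_⟩
    have hvt := mul_abs_sub_le_sub_of_eq_add_integral hc.le hv' hv hg hu hvg ht
    have hut : u t ≤ U := hU (mem_image_of_mem u ht)
    have : |v t - v 0| ≤ (U - u 0) / c := by rw [le_div_iff₀ hc]; linarith
    linarith [abs_sub_abs_le_abs_sub (v t) (v 0)]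
  · right
    have hu_top : Tendsto u atTop atTop := by
      refine tendsto_atTop_atTop.mpr fun b => ?_
      obtain ⟨_, ⟨t₀, ht₀, rfl⟩, hb⟩ := not_bddAbove_iff.mp hbdd b
      exact ⟨t₀, fun t ht => hb.le.trans (hmono ht₀ (le_trans ht₀ ht) ht)⟩
    refine tendsto_atTop_mono' atTop ?_ (hu_top.atTop_div_const (by positivity : 0 < max C 1))
    filter_upwards [eventually_ge_atTop 0] with t ht
    rw [div_le_iff₀ (by positivity)]
    exact (huv t ht).trans (by nlinarith [le_max_left C 1, abs_nonneg (v t)])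

section Neuron

/-! A single neuron `(v, b) = (w_j, a_j)` at a fixed time, with velocities `(v', b')`,
`D i = ℓ'(y_i N_θ(x_i))` and ReLU selections `σ i`. -/

variable {d n : ℕ} {x : Fin n → Fin d → ℝ} {y D σ : Fin n → ℝ} {v v' : Fin d → ℝ} {b b' : ℝ}

lemma dotp_velocity_eq (hv' : ∀ ic, v' ic = -∑ i, D i * y i * b * σ i * x i ic)
    (u : Fin d → ℝ) : dotp v' u = b * ∑ i, -D i * y i * σ i * dotp (x i) u := by
  have : v' = fun ic => ∑ i, (-D i * y i * b * σ i) * x i ic := by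
    ext ic
    rw [hv', ← Finset.sum_neg_distrib]
    exact Finset.sum_congr rfl fun i _ => by ring
  rw [this, dotp_sum_left, Finset.mul_sum]
  exact Finset.sum_congr rfl fun i _ => by ring

lemma mul_deriv_eq_dotp_of_neuron
    (hσ0 : ∀ i, dotp v (x i) < 0 → σ i = 0) (hσ1 : ∀ i, 0 < dotp v (x i) → σ i = 1)
    (hv' : ∀ ic, v' ic = -∑ i, D i * y i * b * σ i * x i ic)
    (hb' : b' = -∑ i, D i * y i * relu (dotp v (x i))) :
    b * b' = dotp v v' := by
  rw [dotp_comm, dotp_velocity_eq hv', hb', ← Finset.sum_neg_distrib]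
  congr 1
  refine Finset.sum_congr rfl fun i _ => ?_
  rw [dotp_comm (x i) v, ← mul_eq_relu_of_selection (hσ0 i) (hσ1 i)]
  ring

lemma abs_deriv_le_of_neuron (hy : ∀ i, |y i| = 1) (hD : ∀ i, D i ≤ 0)
    (hb' : b' = -∑ i, D i * y i * relu (dotp v (x i))) :
    |b'| ≤ ∑ i, -D i * relu (dotp v (x i)) := by
  rw [hb', abs_neg]
  refine (Finset.abs_sum_le_sum_abs _ _).trans (Finset.sum_le_sum fun i _ => ?_)
  rw [abs_mul, abs_mul, hy i, mul_one, abs_of_nonpos (hD i),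
    abs_of_nonneg (le_max_right _ _)]

lemma abs_deriv_le_mul_abs_of_neuron (hy : ∀ i, |y i| = 1) (hD : ∀ i, D i ≤ 0)
    (hb' : b' = -∑ i, D i * y i * relu (dotp v (x i))) (hv : norm2 v = |b|) :
    |b'| ≤ (∑ i, -D i * norm2 (x i)) * |b| := by
  refine (abs_deriv_le_of_neuron hy hD hb').trans ?_
  rw [Finset.sum_mul]
  refine Finset.sum_le_sum fun i _ => ?_
  rw [mul_assoc, ← hv]
  exact mul_le_mul_of_nonneg_left
    ((relu_le_abs _).trans ((abs_dotp_le _ _).trans_eq (mul_comm _ _))) (neg_nonneg.mpr (hD i))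

lemma mul_abs_deriv_le_mul_dotp_of_neuron {z : Fin d → ℝ} {c s : ℝ} (hc : 0 ≤ c)
    (hz : ∀ i, c * norm2 (x i) ≤ y i * dotp (x i) z) (hy : ∀ i, |y i| = 1)
    (hD : ∀ i, D i ≤ 0) (hσ : ∀ i, 0 ≤ σ i)
    (hσ0 : ∀ i, dotp v (x i) < 0 → σ i = 0) (hσ1 : ∀ i, 0 < dotp v (x i) → σ i = 1)
    (hv' : ∀ ic, v' ic = -∑ i, D i * y i * b * σ i * x i ic)
    (hb' : b' = -∑ i, D i * y i * relu (dotp v (x i))) (hv : norm2 v = |b|)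
    (hs : s * b = |b|) :
    c * |b'| ≤ s * dotp v' z := by
  have hdrift : s * dotp v' z = |b| * ∑ i, -D i * σ i * (y i * dotp (x i) z) := by
    rw [dotp_velocity_eq hv', ← mul_assoc, hs]
    congr 1
    exact Finset.sum_congr rfl fun i _ => by ring
  rw [hdrift, Finset.mul_sum]
  refine (mul_le_mul_of_nonneg_left (abs_deriv_le_of_neuron hy hD hb') hc).trans ?_
  rw [Finset.mul_sum]
  refine Finset.sum_le_sum fun i _ => ?_
  have hDσ : 0 ≤ -D i * σ i := mul_nonneg (neg_nonneg.mpr (hD i)) (hσ i)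
  calc c * (-D i * relu (dotp v (x i))) = -D i * σ i * (c * dotp v (x i)) := by
        rw [← mul_eq_relu_of_selection (hσ0 i) (hσ1 i)]; ring
    _ ≤ -D i * σ i * (|b| * (c * norm2 (x i))) := by
        refine mul_le_mul_of_nonneg_left ?_ hDσ
        rw [← hv, mul_left_comm]
        exact mul_le_mul_of_nonneg_left ((le_abs_self _).trans (abs_dotp_le _ _)) hc
    _ = |b| * (-D i * σ i * (c * norm2 (x i))) := by ring
    _ ≤ |b| * (-D i * σ i * (y i * dotp (x i) z)) :=
        mul_le_mul_of_nonneg_left (mul_le_mul_of_nonneg_left (hz i) hDσ) (abs_nonneg _)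

end Neuron

lemma intervalIntegrable_dotp {d : ℕ} {W' : ℝ → Fin d → ℝ} {t : ℝ}
    (hW' : ∀ i, IntervalIntegrable (fun s => W' s i) volume 0 t) (z : Fin d → ℝ) :
    IntervalIntegrable (fun s => dotp (W' s) z) volume 0 t := by
  have := IntervalIntegrable.sum Finset.univ fun i _ => (hW' i).mul_const (z i)
  simpa only [Finset.sum_fn, dotp] using this

lemma dotp_eq_add_integral {d : ℕ} {W W' : ℝ → Fin d → ℝ} {t : ℝ}
    (hW' : ∀ i, IntervalIntegrable (fun s => W' s i) volume 0 t)
    (hW : ∀ i, W t i = W 0 i + ∫ s in (0:ℝ)..t, W' s i) (z : Fin d → ℝ) :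
    dotp (W t) z = dotp (W 0) z + ∫ s in (0:ℝ)..t, dotp (W' s) z := by
  simp only [dotp, hW, add_mul, Finset.sum_add_distrib]
  rw [intervalIntegral.integral_finsetSum fun i _ => (hW' i).mul_const (z i)]
  simp only [intervalIntegral.integral_mul_const]

/-- A gradient-flow trajectory in integrated form: `w'`, `a'` are integrable a.e. derivatives
of `w`, `a`, and `σ i j` selects from the subdifferential of `ψ` at `w_jᵀ x_i`. -/
structure IsGradientFlow {d n k : ℕ} (x : Fin n → Fin d → ℝ) (y : Fin n → ℝ) (ℓ : ℝ → ℝ)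
    (w : ℝ → Fin k → Fin d → ℝ) (a : ℝ → Fin k → ℝ)
    (w' : ℝ → Fin k → Fin d → ℝ) (a' : ℝ → Fin k → ℝ) : Prop where
  intervalIntegrable_w' : ∀ (j : Fin k) (i : Fin d) (t : ℝ),
    IntervalIntegrable (fun s => w' s j i) volume 0 t
  intervalIntegrable_a' : ∀ (j : Fin k) (t : ℝ), IntervalIntegrable (fun s => a' s j) volume 0 t
  w_eq : ∀ (t : ℝ) (j : Fin k) (i : Fin d), w t j i = w 0 j i + ∫ s in (0:ℝ)..t, w' s j i
  a_eq : ∀ (t : ℝ) (j : Fin k), a t j = a 0 j + ∫ s in (0:ℝ)..t, a' s j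
  ode : ∀ᵐ t ∂(volume.restrict (Ici (0:ℝ))),
    ∃ σ : Fin n → Fin k → ℝ,
      (∀ i j, 0 ≤ σ i j ∧ σ i j ≤ 1) ∧
      (∀ i j, dotp (w t j) (x i) < 0 → σ i j = 0) ∧
      (∀ i j, 0 < dotp (w t j) (x i) → σ i j = 1) ∧
      (∀ j ic, w' t j ic =
        -∑ i, deriv ℓ (y i * net (w t) (a t) (x i)) * y i * a t j * σ i j * x i ic) ∧
      (∀ j, a' t j =
        -∑ i, deriv ℓ (y i * net (w t) (a t) (x i)) * y i * relu (dotp (w t j) (x i)))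

namespace IsGradientFlow

variable {d n k : ℕ} {x : Fin n → Fin d → ℝ} {y : Fin n → ℝ} {ℓ : ℝ → ℝ}
  {w w' : ℝ → Fin k → Fin d → ℝ} {a a' : ℝ → Fin k → ℝ}

lemma continuous_w (hθ : IsGradientFlow x y ℓ w a w' a') (j : Fin k) (i : Fin d) :
    Continuous fun t => w t j i :=
  continuous_of_eq_add_integral (hθ.intervalIntegrable_w' j i) (hθ.w_eq · j i)

lemma continuous_a (hθ : IsGradientFlow x y ℓ w a w' a') (j : Fin k) :
    Continuous fun t => a t j :=
  continuous_of_eq_add_integral (hθ.intervalIntegrable_a' j) (hθ.a_eq · j)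

lemma continuous_net (hθ : IsGradientFlow x y ℓ w a w' a') (z : Fin d → ℝ) :
    Continuous fun t => net (w t) (a t) z := by
  have := hθ.continuous_w
  have := hθ.continuous_a
  unfold net relu dotp
  fun_prop

lemma norm2_w_eq_abs_a (hθ : IsGradientFlow x y ℓ w a w' a') (j : Fin k)
    (h0 : |a 0 j| = norm2 (w 0 j)) {t : ℝ} (ht : 0 ≤ t) : norm2 (w t j) = |a t j| := by
  have hww' : ∀ i t, IntervalIntegrable (fun s => 2 * w s j i * w' s j i) volume 0 t :=
    fun i t => (hθ.intervalIntegrable_w' j i t).continuousOn_mul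
      ((continuous_const.mul (hθ.continuous_w j i)).continuousOn)
  have hw : dotp (w t j) (w t j) =
      dotp (w 0 j) (w 0 j) + ∫ s in (0:ℝ)..t, 2 * dotp (w s j) (w' s j) := by
    have h2 : ∀ s, 2 * dotp (w s j) (w' s j) = ∑ i, 2 * w s j i * w' s j i := fun s => by
      simp only [dotp, Finset.mul_sum, mul_assoc]
    simp only [h2]
    simp only [dotp, ← sq, fun i => sq_eq_sq_add_integral (f := fun s => w s j i)
      (hθ.intervalIntegrable_w' j i t) (hθ.w_eq · j i), Finset.sum_add_distrib]
    rw [intervalIntegral.integral_finsetSum fun i _ => hww' i t]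
  have ha := sq_eq_sq_add_integral (f := fun s => a s j) (hθ.intervalIntegrable_a' j t)
    (hθ.a_eq · j)
  have hrate : ∫ s in (0:ℝ)..t, 2 * a s j * a' s j =
      ∫ s in (0:ℝ)..t, 2 * dotp (w s j) (w' s j) := by
    refine intervalIntegral.integral_congr_ae_restrict
      (ae_restrict_of_ae_restrict_of_subset (t := Ici 0) ?_ ?_)
    · rw [uIoc_of_le ht]
      exact Set.Ioc_subset_Ioi_self.trans Set.Ioi_subset_Ici_self
    · filter_upwards [hθ.ode] with s hs
      obtain ⟨σ, -, hσ0, hσ1, hw', ha'⟩ := hs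
      rw [mul_assoc, mul_deriv_eq_dotp_of_neuron (fun i => hσ0 i j) (fun i => hσ1 i j)
        (hw' j) (ha' j)]
  refine (pow_left_inj₀ (norm2_nonneg _) (abs_nonneg _) two_ne_zero).mp ?_
  rw [norm2_sq_eq_dotp, sq_abs, ha, hrate, ← sq_abs, h0, norm2_sq_eq_dotp, hw]

lemma a_ne_zero (hθ : IsGradientFlow x y ℓ w a w' a') (hy : ∀ i, |y i| = 1)
    (hℓc : Continuous (deriv ℓ)) (hℓ : ∀ u, deriv ℓ u ≤ 0) (j : Fin k)
    (h0 : |a 0 j| = norm2 (w 0 j)) (ha0 : a 0 j ≠ 0) {t : ℝ} (ht : 0 ≤ t) : a t j ≠ 0 := by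
  refine ne_zero_of_abs_deriv_le_mul (f := fun s => a s j) (hθ.intervalIntegrable_a' j)
    (hθ.a_eq · j) (K := fun s => ∑ i, -deriv ℓ (y i * net (w s) (a s) (x i)) * norm2 (x i))
    ?_ ?_ ha0 ht
  · have := hθ.continuous_net
    fun_prop
  · filter_upwards [hθ.ode, ae_restrict_mem measurableSet_Ici] with s hs hs0
    obtain ⟨σ, -, -, -, -, ha'⟩ := hs
    exact abs_deriv_le_mul_abs_of_neuron hy (fun i => hℓ _) (ha' j)
      (hθ.norm2_w_eq_abs_a j h0 hs0)

lemma ae_mul_abs_deriv_a_le (hθ : IsGradientFlow x y ℓ w a w' a') (hy : ∀ i, |y i| = 1)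
    (hℓ : ∀ u, deriv ℓ u ≤ 0) (j : Fin k) (h0 : |a 0 j| = norm2 (w 0 j))
    {z : Fin d → ℝ} {c s : ℝ} (hc : 0 ≤ c) (hz : ∀ i, c * norm2 (x i) ≤ y i * dotp (x i) z)
    (hs : ∀ t, 0 ≤ t → s * a t j = |a t j|) :
    ∀ᵐ t ∂(volume.restrict (Ici (0:ℝ))), c * |a' t j| ≤ s * dotp (w' t j) z := by
  filter_upwards [hθ.ode, ae_restrict_mem measurableSet_Ici] with t ht ht0
  obtain ⟨σ, hσ, hσ0, hσ1, hw', ha'⟩ := ht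
  exact mul_abs_deriv_le_mul_dotp_of_neuron hc hz hy (fun i => hℓ _) (fun i => (hσ i j).1)
    (fun i => hσ0 i j) (fun i => hσ1 i j) (hw' j) (ha' j) (hθ.norm2_w_eq_abs_a j h0 ht0)
    (hs t ht0)

end IsGradientFlow

theorem gradient_flow_bounded_or_to_infinity_general
    (d n k : ℕ) (x : Fin n → Fin d → ℝ) (y : Fin n → ℝ)
    (hy : ∀ i, y i = 1 ∨ y i = -1)
    (hsep1 : ∀ i i', y i = y i' → 0 < dotp (x i) (x i'))
    (hsep2 : ∀ i i', y i ≠ y i' → dotp (x i) (x i') ≤ 0)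
    (ℓ : ℝ → ℝ)
    (hℓ : (ℓ = fun u => Real.exp (-u)) ∨ (ℓ = fun u => Real.log (1 + Real.exp (-u))))
    (w : ℝ → Fin k → Fin d → ℝ) (a : ℝ → Fin k → ℝ)
    (w' : ℝ → Fin k → Fin d → ℝ) (a' : ℝ → Fin k → ℝ)
    (hwInt : ∀ (j : Fin k) (i : Fin d) (t : ℝ),
      IntervalIntegrable (fun s => w' s j i) volume 0 t)
    (haInt : ∀ (j : Fin k) (t : ℝ), IntervalIntegrable (fun s => a' s j) volume 0 t)
    (hwFTC : ∀ (t : ℝ) (j : Fin k) (i : Fin d),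
      w t j i = w 0 j i + ∫ s in (0:ℝ)..t, w' s j i)
    (haFTC : ∀ (t : ℝ) (j : Fin k), a t j = a 0 j + ∫ s in (0:ℝ)..t, a' s j)
    (hODE : ∀ᵐ t ∂(volume.restrict (Set.Ici (0:ℝ))),
      ∃ σ : Fin n → Fin k → ℝ,
        (∀ i j, 0 ≤ σ i j ∧ σ i j ≤ 1) ∧
        (∀ i j, dotp (w t j) (x i) < 0 → σ i j = 0) ∧
        (∀ i j, 0 < dotp (w t j) (x i) → σ i j = 1) ∧
        (∀ j ic, w' t j ic =
          -∑ i, deriv ℓ (y i * net (w t) (a t) (x i)) * y i * a t j * σ i j * x i ic) ∧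
        (∀ j, a' t j =
          -∑ i, deriv ℓ (y i * net (w t) (a t) (x i)) * y i * relu (dotp (w t j) (x i))))
    (hbal : ∀ j, |a 0 j| = norm2 (w 0 j) ∧ a 0 j ≠ 0) :
    ∀ j : Fin k,
      (∃ M : ℝ, ∀ t : ℝ, 0 ≤ t → |a t j| ≤ M) ∨
        Tendsto (fun t => |a t j|) atTop atTop := by
  intro j
  have hθ : IsGradientFlow x y ℓ w a w' a' := ⟨hwInt, haInt, hwFTC, haFTC, hODE⟩
  have hyabs : ∀ i, |y i| = 1 := fun i => by rcases hy i with h | h <;> simp [h]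
  obtain ⟨hℓc, hℓneg⟩ := continuous_deriv_loss_and_deriv_nonpos hℓ
  obtain ⟨s, hs, hsa⟩ := exists_sign_mul_eq_abs (hθ.continuous_a j)
    fun t ht => hθ.a_ne_zero hyabs hℓc hℓneg j (hbal j).1 (hbal j).2 ht
  obtain ⟨c, hc, hz⟩ := exists_pos_mul_norm2_le_margin hy hsep1 hsep2
  set z : Fin d → ℝ := fun ic => ∑ i, y i * x i ic
  refine bounded_or_tendsto_abs_atTop (u := fun t => s * dotp (w t j) z) (C := norm2 z) hc
    (haInt j) (haFTC · j) (fun t => (intervalIntegrable_dotp (hwInt j · t) z).const_mul s)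
    (fun t => by rw [dotp_eq_add_integral (W := (w · j)) (hwInt j · t) (hwFTC t j) z, mul_add,
      intervalIntegral.integral_const_mul])
    (hθ.ae_mul_abs_deriv_a_le hyabs hℓneg j (hbal j).1 hc.le hz hsa) fun t ht => ?_
  calc s * dotp (w t j) z ≤ |dotp (w t j) z| := by
        rw [← one_mul |dotp _ _|, ← hs, ← abs_mul]; exact le_abs_self _
    _ ≤ norm2 (w t j) * norm2 z := abs_dotp_le _ _
    _ = norm2 z * |a t j| := by rw [hθ.norm2_w_eq_abs_a j (hbal j).1 ht, mul_comm]

/-- for each `j`, either `|a_j(t)|` is bounded on `[0, ∞)` or `|a_j(t)| → ∞`. -/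
theorem gradient_flow_bounded_or_to_infinity
    (d n k : ℕ) (x : Fin n → Fin d → ℝ) (y : Fin n → ℝ)
    (hy : ∀ i, y i = 1 ∨ y i = -1)
    (hsep1 : ∀ i i', y i = y i' → 0 < dotp (x i) (x i'))
    (hsep2 : ∀ i i', y i ≠ y i' → dotp (x i) (x i') ≤ 0)
    (ℓ : ℝ → ℝ)
    (hℓ : (ℓ = fun u => Real.exp (-u)) ∨ (ℓ = fun u => Real.log (1 + Real.exp (-u))))
    (w : ℝ → Fin k → Fin d → ℝ) (a : ℝ → Fin k → ℝ)
    (w' : ℝ → Fin k → Fin d → ℝ) (a' : ℝ → Fin k → ℝ)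
    (hwInt : ∀ (j : Fin k) (i : Fin d) (t : ℝ),
      IntervalIntegrable (fun s => w' s j i) volume 0 t)
    (haInt : ∀ (j : Fin k) (t : ℝ), IntervalIntegrable (fun s => a' s j) volume 0 t)
    (hwFTC : ∀ (t : ℝ) (j : Fin k) (i : Fin d),
      w t j i = w 0 j i + ∫ s in (0:ℝ)..t, w' s j i)
    (haFTC : ∀ (t : ℝ) (j : Fin k), a t j = a 0 j + ∫ s in (0:ℝ)..t, a' s j)
    (hODE : ∀ᵐ t ∂(volume.restrict (Set.Ici (0:ℝ))),
      ∃ σ : Fin n → Fin k → ℝ,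
        (∀ i j, 0 ≤ σ i j ∧ σ i j ≤ 1) ∧
        (∀ i j, dotp (w t j) (x i) < 0 → σ i j = 0) ∧
        (∀ i j, 0 < dotp (w t j) (x i) → σ i j = 1) ∧
        (∀ j ic, w' t j ic =
          -∑ i, deriv ℓ (y i * net (w t) (a t) (x i)) * y i * a t j * σ i j * x i ic) ∧
        (∀ j, a' t j =
          -∑ i, deriv ℓ (y i * net (w t) (a t) (x i)) * y i * relu (dotp (w t j) (x i))))
    (hbal : ∀ j, |a 0 j| = norm2 (w 0 j) ∧ a 0 j ≠ 0)
    (hlive : ∀ s : ℝ, s = 1 ∨ s = -1 →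
      ∃ i j, y i = s ∧ 0 < y i * a 0 j * relu (dotp (w 0 j) (x i))) :
    ∀ j : Fin k,
      (∃ M : ℝ, ∀ t : ℝ, 0 ≤ t → |a t j| ≤ M) ∨
        Tendsto (fun t => |a t j|) atTop atTop :=
  gradient_flow_bounded_or_to_infinity_general d n k x y hy hsep1 hsep2 ℓ hℓ w a w' a' hwInt haInt
    hwFTC haFTC hODE hbal
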